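/- Let f_y : (ZMod p)^n → ZMod (p^k) for y ∈ (ZMod p)^s be pairwise disjoint spectra generalized s-plateaued functions (their Walsh supports are pairwise disjoint). Let W ⊕ U = (ZMod p)^{n+s} be a direct sum decomposition with dim W = n, dim U = s, let M be an n×(n+s) matrix whose rows form a basis of W, and let π : (ZMod p)^s → U be a bijection. Define F((xM) + π(y)) = f_y(x) for x ∈ (ZMod p)^n, y ∈ (ZMod p)^s. Then F is a well-defined generalized bent function on (ZMod p)^{n+s}, i.e. |W_F(a)| = p^{(n+s)/2} for all a. -/

import Mathlib

/-- The complex primitive `m`-th root of unity `e^{2πi/m}`. -/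
noncomputable def zeta (m : ℕ) : ℂ := Complex.exp (2 * Real.pi * Complex.I / m)

/-- Inner product on `(ZMod p)^n`. -/
def dot {p n : ℕ} (a x : Fin n → ZMod p) : ZMod p := ∑ i, a i * x i

/-- Walsh transform of a generalized p-ary function `f : (ZMod p)^n → ZMod (p^k)`. -/
noncomputable def walsh (p n k : ℕ) [Fact (Nat.Prime p)]
    (f : (Fin n → ZMod p) → ZMod (p ^ k)) (a : Fin n → ZMod p) : ℂ :=
  ∑ x : Fin n → ZMod p, zeta (p ^ k) ^ (f x).val * zeta p ^ ((-(dot a x)).val)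

lemma zeta_pow_self {m : ℕ} (hm : m ≠ 0) : zeta m ^ m = 1 :=
  (Complex.isPrimitiveRoot_exp m hm).pow_eq_one

lemma abs_zeta_pow (m v : ℕ) : ‖zeta m ^ v‖ = 1 := by
  have h : ‖zeta m‖ = 1 := by
    rw [zeta, Complex.norm_exp]
    have : (2 * (Real.pi : ℂ) * Complex.I / (m : ℂ)).re = 0 := by
      simp [Complex.div_re]
    rw [this, Real.exp_zero]
  rw [norm_pow, h, one_pow]

lemma zeta_pow_ne_zero (m v : ℕ) : zeta m ^ v ≠ 0 := by
  intro h
  have := abs_zeta_pow m v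
  rw [h] at this; simp at this

lemma zeta_val_add {m : ℕ} [NeZero m] (c d : ZMod m) :
    zeta m ^ (c + d).val = zeta m ^ c.val * zeta m ^ d.val := by
  rw [← pow_add, ZMod.val_add]
  exact (pow_eq_pow_mod _ (zeta_pow_self (NeZero.ne m))).symm

lemma conj_zeta_val {m : ℕ} [NeZero m] (c : ZMod m) :
    (starRingEnd ℂ) (zeta m ^ c.val) = zeta m ^ (-c).val := by
  have h1 : zeta m ^ (-c).val * zeta m ^ c.val = 1 := by
    rw [← zeta_val_add, neg_add_cancel, ZMod.val_zero, pow_zero]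
  have h2 : (starRingEnd ℂ) (zeta m ^ c.val) * zeta m ^ c.val = 1 := by
    rw [mul_comm, Complex.mul_conj, Complex.normSq_eq_norm_sq, abs_zeta_pow]
    norm_num
  exact mul_right_cancel₀ (zeta_pow_ne_zero m c.val) (h2.trans h1.symm)

lemma zeta_val_sum {m : ℕ} [NeZero m] {ι : Type*} (t : Finset ι) (g : ι → ZMod m) :
    zeta m ^ ((∑ i ∈ t, g i).val) = ∏ i ∈ t, zeta m ^ (g i).val := by
  induction t using Finset.cons_induction with
  | empty => simp
  | cons i t hi ih => rw [Finset.sum_cons, Finset.prod_cons, zeta_val_add, ih]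

lemma sum_zeta_val {p : ℕ} [Fact p.Prime] : ∑ t : ZMod p, zeta p ^ t.val = 0 := by
  haveI : NeZero p := ⟨(Fact.out : p.Prime).ne_zero⟩
  have hprim := Complex.isPrimitiveRoot_exp p (NeZero.ne p)
  have hgeo := hprim.geom_sum_eq_zero (Fact.out : p.Prime).one_lt
  rw [← hgeo]
  apply Finset.sum_nbij' (i := fun (t : ZMod p) => t.val) (j := fun i => (i : ZMod p))
  · intro a _; exact Finset.mem_range.mpr (ZMod.val_lt a)
  · intro a _; exact Finset.mem_univ _
  · intro a _; exact ZMod.natCast_rightInverse a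
  · intro a ha; exact ZMod.val_cast_of_lt (Finset.mem_range.mp ha)
  · intro a _; rfl

lemma sum_zeta_mul {p : ℕ} [Fact p.Prime] (c : ZMod p) (hc : c ≠ 0) :
    ∑ t : ZMod p, zeta p ^ (c * t).val = 0 := by
  haveI := Fact.out (p := p.Prime)
  rw [← sum_zeta_val (p := p)]
  exact Equiv.sum_comp (Equiv.mulLeft₀ c hc) (fun u => zeta p ^ u.val)

lemma sum_char_vec {p n : ℕ} [Fact p.Prime] (v : Fin n → ZMod p) :
    ∑ b : Fin n → ZMod p, zeta p ^ (dot b v).val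
      = if v = 0 then (p : ℂ) ^ n else 0 := by
  haveI : NeZero p := ⟨(Fact.out : p.Prime).ne_zero⟩
  have h1 : ∀ b : Fin n → ZMod p, zeta p ^ (dot b v).val
      = ∏ i, zeta p ^ (b i * v i).val := fun b => zeta_val_sum _ _
  simp_rw [h1]
  have h2 : ∑ b : Fin n → ZMod p, ∏ i, zeta p ^ (b i * v i).val
      = ∏ i, ∑ t : ZMod p, zeta p ^ (t * v i).val := by
    rw [← Fintype.piFinset_univ]
    exact (Finset.prod_univ_sum (fun _ => Finset.univ) (fun i t => zeta p ^ (t * v i).val)).symm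
  rw [h2]
  by_cases hv : v = 0
  · subst hv
    simp [ZMod.card]
  · obtain ⟨i, hi⟩ : ∃ i, v i ≠ 0 := by
      by_contra h; push_neg at h; exact hv (funext h)
    rw [if_neg hv]
    apply Finset.prod_eq_zero (Finset.mem_univ i)
    have : ∀ t : ZMod p, zeta p ^ (t * v i).val = zeta p ^ (v i * t).val := by
      intro t; rw [mul_comm]
    simp_rw [this]
    exact sum_zeta_mul (v i) hi

lemma dot_sub_right {p n : ℕ} (a u v : Fin n → ZMod p) :
    dot a (u - v) = dot a u - dot a v := by
  simp [dot, mul_sub, Finset.sum_sub_distrib]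

lemma dot_add_right {p n : ℕ} (a u v : Fin n → ZMod p) :
    dot a (u + v) = dot a u + dot a v := by
  simp [dot, mul_add, Finset.sum_add_distrib]

lemma parseval (p n k : ℕ) [Fact p.Prime]
    (f : (Fin n → ZMod p) → ZMod (p ^ k)) :
    ∑ b : Fin n → ZMod p, walsh p n k f b * (starRingEnd ℂ) (walsh p n k f b)
      = (p : ℂ) ^ (2 * n) := by
  haveI : NeZero p := ⟨(Fact.out : p.Prime).ne_zero⟩
  haveI : NeZero (p ^ k) := ⟨pow_ne_zero k (NeZero.ne p)⟩
  set A : (Fin n → ZMod p) → ℂ := fun x => zeta (p ^ k) ^ (f x).val with hA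
  set B : (Fin n → ZMod p) → (Fin n → ZMod p) → ℂ :=
    fun b x => zeta p ^ ((-(dot b x)).val) with hB
  have key : ∀ x x' : Fin n → ZMod p,
      ∑ b : Fin n → ZMod p, B b x * (starRingEnd ℂ) (B b x')
        = if x = x' then (p : ℂ) ^ n else 0 := by
    intro x x'
    have h1 : ∀ b : Fin n → ZMod p,
        B b x * (starRingEnd ℂ) (B b x') = zeta p ^ (dot b (x' - x)).val := by
      intro b
      rw [hB]
      simp only
      rw [conj_zeta_val, neg_neg, ← zeta_val_add]
      congr 1
      rw [dot_sub_right]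
      ring_nf
    simp_rw [h1]
    rw [sum_char_vec]
    congr 1
    rw [eq_iff_iff, sub_eq_zero, eq_comm]
  have expand : ∀ b, walsh p n k f b * (starRingEnd ℂ) (walsh p n k f b)
      = ∑ x : Fin n → ZMod p, ∑ x' : Fin n → ZMod p,
          (A x * (starRingEnd ℂ) (A x')) * (B b x * (starRingEnd ℂ) (B b x')) := by
    intro b
    rw [walsh, map_sum, Finset.sum_mul_sum]
    apply Finset.sum_congr rfl; intro x _
    apply Finset.sum_congr rfl; intro x' _
    rw [map_mul]
    ring
  simp_rw [expand]
  rw [Finset.sum_comm]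
  have step : ∀ x, (∑ b : Fin n → ZMod p, ∑ x' : Fin n → ZMod p,
      (A x * (starRingEnd ℂ) (A x')) * (B b x * (starRingEnd ℂ) (B b x')))
      = (A x * (starRingEnd ℂ) (A x)) * (p : ℂ) ^ n := by
    intro x
    rw [Finset.sum_comm]
    have : ∀ x', (∑ b : Fin n → ZMod p,
        (A x * (starRingEnd ℂ) (A x')) * (B b x * (starRingEnd ℂ) (B b x')))
        = (A x * (starRingEnd ℂ) (A x')) * if x = x' then (p : ℂ) ^ n else 0 := by
      intro x'
      rw [← Finset.mul_sum, key]
    simp_rw [this]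
    simp [mul_ite, Finset.sum_ite_eq]
  simp_rw [step]
  have hA1 : ∀ x, A x * (starRingEnd ℂ) (A x) = 1 := by
    intro x
    rw [Complex.mul_conj, Complex.normSq_eq_norm_sq, hA]
    simp only
    rw [abs_zeta_pow]
    norm_num
  simp_rw [hA1, one_mul, Finset.sum_const, Finset.card_univ]
  rw [Fintype.card_fun]
  simp [ZMod.card, two_mul, pow_add]

lemma parseval_real (p n k : ℕ) [Fact p.Prime]
    (f : (Fin n → ZMod p) → ZMod (p ^ k)) :
    ∑ b : Fin n → ZMod p, Complex.normSq (walsh p n k f b) = (p : ℝ) ^ (2 * n) := by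
  have h := parseval p n k f
  apply Complex.ofReal_injective
  push_cast
  rw [← h]
  apply Finset.sum_congr rfl; intro b _
  rw [Complex.mul_conj]

lemma exists_support (p n k s : ℕ) [Fact p.Prime]
    (f : (Fin s → ZMod p) → (Fin n → ZMod p) → ZMod (p ^ k))
    (hf : ∀ y a, ‖walsh p n k (f y) a‖ = (p : ℝ) ^ (((n : ℝ) + (s : ℝ)) / 2) ∨
      walsh p n k (f y) a = 0)
    (hdisj : ∀ y y', y ≠ y' → ∀ a, walsh p n k (f y) a = 0 ∨ walsh p n k (f y') a = 0) :
    ∀ b : Fin n → ZMod p, ∃ y, walsh p n k (f y) b ≠ 0 := by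
  have hp1 : (1:ℝ) < p := by exact_mod_cast (Fact.out : p.Prime).one_lt
  have hp0 : (0:ℝ) < p := lt_trans one_pos hp1
  intro b
  by_contra hcon
  push_neg at hcon
  -- squared-abs value lemma
  have hval : ∀ y b', walsh p n k (f y) b' ≠ 0 →
      Complex.normSq (walsh p n k (f y) b') = (p : ℝ) ^ (n + s) := by
    intro y b' hne
    rcases hf y b' with h | h
    · rw [Complex.normSq_eq_norm_sq, h, ← Real.rpow_natCast ((p:ℝ) ^ (((n:ℝ)+(s:ℝ))/2)) 2,
        ← Real.rpow_mul (le_of_lt hp0)]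
      rw [show ((n:ℝ)+(s:ℝ))/2 * (2:ℕ) = ((n+s : ℕ) : ℝ) by push_cast; ring]
      exact Real.rpow_natCast _ _
    · exact absurd h hne
  -- bound on column sums
  have hbound : ∀ b' : Fin n → ZMod p,
      ∑ y : Fin s → ZMod p, Complex.normSq (walsh p n k (f y) b') ≤ (p : ℝ) ^ (n + s) := by
    intro b'
    by_cases hb : ∃ y₀, walsh p n k (f y₀) b' ≠ 0
    · obtain ⟨y₀, hy₀⟩ := hb
      rw [Finset.sum_eq_single y₀]
      · rw [hval y₀ b' hy₀]
      · intro y _ hne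
        rcases hdisj y y₀ hne b' with h | h
        · rw [h]; simp
        · exact absurd h hy₀
      · intro h; exact absurd (Finset.mem_univ y₀) h
    · push_neg at hb
      have : ∀ y : Fin s → ZMod p, Complex.normSq (walsh p n k (f y) b') = 0 := by
        intro y; rw [hb y]; simp
      simp_rw [this]
      simp

  have hzero : ∑ y : Fin s → ZMod p, Complex.normSq (walsh p n k (f y) b) = 0 := by
    have : ∀ y : Fin s → ZMod p, Complex.normSq (walsh p n k (f y) b) = 0 := by
      intro y; rw [hcon y]; simp
    simp_rw [this]; simp
  -- total sum
  have htot : ∑ y : Fin s → ZMod p, ∑ b' : Fin n → ZMod p,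
      Complex.normSq (walsh p n k (f y) b') = (p:ℝ)^s * (p:ℝ)^(2*n) := by
    have : ∀ y : Fin s → ZMod p, ∑ b' : Fin n → ZMod p,
        Complex.normSq (walsh p n k (f y) b') = (p : ℝ) ^ (2 * n) :=
      fun y => parseval_real p n k (f y)
    simp_rw [this, Finset.sum_const, Finset.card_univ, Fintype.card_fun, ZMod.card,
      Fintype.card_fin, nsmul_eq_mul]
    push_cast
    ring
  rw [Finset.sum_comm] at htot
  -- upper bound on total
  have hle : ∑ b' : Fin n → ZMod p, ∑ y : Fin s → ZMod p,
      Complex.normSq (walsh p n k (f y) b')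
      ≤ ((p ^ n - 1 : ℕ) : ℝ) * (p : ℝ) ^ (n + s) := by
    rw [← Finset.add_sum_erase _ _ (Finset.mem_univ b), hzero, zero_add]
    calc ∑ b' ∈ Finset.univ.erase b, ∑ y : Fin s → ZMod p,
          Complex.normSq (walsh p n k (f y) b')
        ≤ ∑ b' ∈ Finset.univ.erase b, (p : ℝ) ^ (n + s) :=
          Finset.sum_le_sum (fun b' _ => hbound b')
      _ = ((p ^ n - 1 : ℕ) : ℝ) * (p : ℝ) ^ (n + s) := by
          rw [Finset.sum_const, Finset.card_erase_of_mem (Finset.mem_univ b),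
            Finset.card_univ, Fintype.card_fun, ZMod.card, Fintype.card_fin, nsmul_eq_mul]
  rw [htot] at hle
  have hcast : ((p ^ n - 1 : ℕ) : ℝ) = (p:ℝ)^n - 1 := by
    have h1 : 1 ≤ p ^ n := Nat.one_le_pow _ _ (Fact.out : p.Prime).pos
    push_cast [Nat.cast_sub h1]
    ring
  rw [hcast] at hle
  have hQ : (0:ℝ) < (p:ℝ)^n := by positivity
  have hR : (0:ℝ) < (p:ℝ)^(n+s) := by positivity
  have hmain : (p:ℝ)^s * (p:ℝ)^(2*n) = (p:ℝ)^n * (p:ℝ)^(n+s) := by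
    rw [← pow_add, ← pow_add]
    congr 1
    omega
  rw [hmain] at hle
  nlinarith [hle, hQ, hR]

lemma dot_vecMul {p n m : ℕ} (a : Fin m → ZMod p) (x : Fin n → ZMod p)
    (M : Matrix (Fin n) (Fin m) (ZMod p)) :
    dot a (Matrix.vecMul x M) = dot (Matrix.mulVec M a) x := by
  simp only [dot, Matrix.vecMul, Matrix.mulVec, dotProduct, Finset.mul_sum,
    Finset.sum_mul]
  rw [Finset.sum_comm]
  apply Finset.sum_congr rfl; intro i _
  apply Finset.sum_congr rfl; intro j _
  ring

theorem stmt7 (p n k s : ℕ) [Fact (Nat.Prime p)] (hn : 1 ≤ n) (hk : 1 ≤ k) (hs : s ≤ n)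
    (hps : p = 2 → k = 1 → Even (n + s))
    (f : (Fin s → ZMod p) → (Fin n → ZMod p) → ZMod (p ^ k))
    (hf : ∀ y a, ‖walsh p n k (f y) a‖ = (p : ℝ) ^ (((n : ℝ) + (s : ℝ)) / 2) ∨
      walsh p n k (f y) a = 0)
    (hdisj : ∀ y y', y ≠ y' → ∀ a, walsh p n k (f y) a = 0 ∨ walsh p n k (f y') a = 0)
    (W U : Submodule (ZMod p) (Fin (n + s) → ZMod p))
    (hWU : W ⊓ U = ⊥) (hWU' : W ⊔ U = ⊤)
    (hWd : Module.finrank (ZMod p) W = n) (hUd : Module.finrank (ZMod p) U = s)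
    (M : Matrix (Fin n) (Fin (n + s)) (ZMod p))
    (hMW : ∀ i, M i ∈ W)
    (hMli : LinearIndependent (ZMod p) (fun i : Fin n => M i))
    (π : (Fin s → ZMod p) → (Fin (n + s) → ZMod p))
    (hπU : ∀ y, π y ∈ U) (hπinj : Function.Injective π)
    (hπsurj : ∀ u ∈ U, ∃ y, π y = u)
    (F : (Fin (n + s) → ZMod p) → ZMod (p ^ k))
    (hF : ∀ x y, F (Matrix.vecMul x M + π y) = f y x) :
    ∀ a : Fin (n + s) → ZMod p,
      ‖walsh p (n + s) k F a‖ = (p : ℝ) ^ (((n : ℝ) + (s : ℝ)) / 2) := by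
  haveI : NeZero p := ⟨(Fact.out : p.Prime).ne_zero⟩
  haveI : NeZero (p ^ k) := ⟨pow_ne_zero k (NeZero.ne p)⟩
  intro a
  -- the parametrization map
  set φ : (Fin n → ZMod p) × (Fin s → ZMod p) → (Fin (n + s) → ZMod p) :=
    fun q => Matrix.vecMul q.1 M + π q.2 with hφ
  have hvec : ∀ x : Fin n → ZMod p, Matrix.vecMul x M = ∑ i, x i • M i := by
    intro x
    funext j
    simp [Matrix.vecMul, dotProduct, Finset.sum_apply]
  have hvecW : ∀ x : Fin n → ZMod p, Matrix.vecMul x M ∈ W := by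
    intro x
    rw [hvec]
    exact Submodule.sum_mem W (fun i _ => Submodule.smul_mem W _ (hMW i))
  have hinj : Function.Injective φ := by
    rintro ⟨x₁, y₁⟩ ⟨x₂, y₂⟩ h
    simp only [hφ] at h
    have hmem : Matrix.vecMul x₁ M - Matrix.vecMul x₂ M ∈ W ⊓ U := by
      constructor
      · exact Submodule.sub_mem W (hvecW x₁) (hvecW x₂)
      · have : Matrix.vecMul x₁ M - Matrix.vecMul x₂ M = π y₂ - π y₁ := by
          rw [sub_eq_sub_iff_add_eq_add, h]
          exact add_comm _ _
        rw [this]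
        exact Submodule.sub_mem U (hπU y₂) (hπU y₁)
    rw [hWU, Submodule.mem_bot] at hmem
    have hx : x₁ = x₂ := by
      have hsum : ∑ i, (x₁ - x₂) i • M i = 0 := by
        rw [← hvec (x₁ - x₂), Matrix.sub_vecMul, hmem]
      have := (Fintype.linearIndependent_iff.mp hMli) (x₁ - x₂) hsum
      funext i
      have := this i
      simpa [sub_eq_zero] using this
    subst hx
    have hy : π y₁ = π y₂ := by
      have : Matrix.vecMul x₁ M + π y₁ = Matrix.vecMul x₁ M + π y₂ := h
      exact add_left_cancel this
    exact Prod.ext rfl (hπinj hy)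
  have hbij : Function.Bijective φ := by
    rw [Fintype.bijective_iff_injective_and_card]
    refine ⟨hinj, ?_⟩
    simp [Fintype.card_fun, ZMod.card, ← pow_add]
  set b : Fin n → ZMod p := Matrix.mulVec M a with hb
  -- rewrite the Walsh sum via φ
  have hsum : walsh p (n + s) k F a
      = ∑ y : Fin s → ZMod p, zeta p ^ ((-(dot a (π y))).val) * walsh p n k (f y) b := by
    rw [walsh]
    rw [← Function.Bijective.sum_comp hbij
      (fun z => zeta (p ^ k) ^ (F z).val * zeta p ^ ((-(dot a z)).val))]
    rw [Fintype.sum_prod_type_right]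
    apply Finset.sum_congr rfl; intro y _
    rw [walsh, Finset.mul_sum]
    apply Finset.sum_congr rfl; intro x _
    have h1 : F (φ (x, y)) = f y x := hF x y
    have h2 : (-(dot a (φ (x, y)))) = (-(dot b x)) + (-(dot a (π y))) := by
      simp only [hφ]
      rw [dot_add_right, dot_vecMul, ← hb]
      ring
    rw [h1, h2, zeta_val_add]
    ring
  obtain ⟨y₀, hy₀⟩ := exists_support p n k s f hf hdisj b
  have hone : walsh p (n + s) k F a
      = zeta p ^ ((-(dot a (π y₀))).val) * walsh p n k (f y₀) b := by
    rw [hsum, Finset.sum_eq_single y₀]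
    · intro y _ hne
      rcases hdisj y y₀ hne b with h | h
      · rw [h, mul_zero]
      · exact absurd h hy₀
    · intro h; exact absurd (Finset.mem_univ y₀) h
  rw [hone, norm_mul, abs_zeta_pow, one_mul]
  rcases hf y₀ b with h | h
  · exact h
  · exact absurd h hy₀
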